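/- Fundamental identity for discrete STFT phase retrieval: for x, y, g, h ∈ ℂ^N and all λ ∈ (ℤ_N)², the discrete Fourier transform over (ℤ_N)² of the product V_g x · conj(V_h y) satisfies (V_g x · conj(V_h y))^(λ) = N (V_y x · conj(V_h g))(-Jλ), where J = [[0,1],[-1,0]]. -/
import Mathlib


open scoped Real ComplexConjugate BigOperators

/-- The character `m ↦ e^{2πi m/N}` on `ℤ_N`. -/
noncomputable def zchar (N : ℕ) [NeZero N] (m : ZMod N) : ℂ :=
  Complex.exp (2 * π * Complex.I * (m.val : ℝ) / N)

/-- Circular translation `(T_k x)_j = x_{j-k}` on `ℂ^N`. -/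
def tshift {N : ℕ} [NeZero N] (k : ZMod N) (x : ZMod N → ℂ) : ZMod N → ℂ :=
  fun j => x (j - k)

/-- Modulation `(M_l x)_j = e^{2πi jl/N} x_j` on `ℂ^N`. -/
noncomputable def mshift {N : ℕ} [NeZero N] (l : ZMod N) (x : ZMod N → ℂ) : ZMod N → ℂ :=
  fun j => zchar N (j * l) * x j

/-- Time-frequency shift `π(k,l) = M_l T_k`. -/
noncomputable def tfshift {N : ℕ} [NeZero N] (p : ZMod N × ZMod N)
    (x : ZMod N → ℂ) : ZMod N → ℂ :=
  mshift p.2 (tshift p.1 x)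

/-- The discrete short-time Fourier transform `V_g x(λ) = ⟨x, π(λ)g⟩`. -/
noncomputable def dstft {N : ℕ} [NeZero N] (g x : ZMod N → ℂ)
    (p : ZMod N × ZMod N) : ℂ :=
  ∑ n : ZMod N, x n * conj (tfshift p g n)

variable {N : ℕ} [NeZero N]

lemma zchar_eq_std (m : ZMod N) : zchar N m = ZMod.stdAddChar m := by
  rw [ZMod.stdAddChar_apply, ZMod.toCircle_apply, zchar]
  norm_cast

lemma zchar_mul (a b : ZMod N) : zchar N a * zchar N b = zchar N (a + b) := by
  rw [zchar_eq_std, zchar_eq_std, zchar_eq_std, ← AddChar.map_add_eq_mul]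

lemma zchar_conj (a : ZMod N) : conj (zchar N a) = zchar N (-a) := by
  have h1 : zchar N a * zchar N (-a) = 1 := by rw [zchar_mul]; simp [zchar]
  have h2 : zchar N a * conj (zchar N a) = 1 := by
    have harg : (2 * ↑π * Complex.I * ((a.val : ℝ) : ℂ) / N) +
        conj (2 * ↑π * Complex.I * ((a.val : ℝ) : ℂ) / N) = 0 := by
      simp only [map_div₀, map_mul, Complex.conj_I, Complex.conj_ofReal, map_ofNat,
        Complex.conj_natCast]
      ring
    rw [zchar, ← Complex.exp_conj, ← Complex.exp_add, harg, Complex.exp_zero]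
  exact (mul_left_cancel₀ (fun h => by simp [h] at h1) (h2.trans h1.symm))

lemma zchar_sum (c : ZMod N) :
    ∑ p : ZMod N, zchar N (c * p) = if c = 0 then (N : ℂ) else 0 := by
  simp only [zchar_eq_std]
  have := AddChar.sum_mulShift (ψ := ZMod.stdAddChar (N := N)) c (ZMod.isPrimitive_stdAddChar N)
  simpa [mul_comm, ZMod.card] using this

/-- Fundamental identity for discrete STFT phase retrieval:
`(V_g x · conj(V_h y))^(λ) = N (V_y x · conj(V_h g))(-Jλ)` where for
`λ = (k,l)` one has `-Jλ = (-l, k)`. -/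
theorem dstft_fourier_magic {N : ℕ} [NeZero N] (x y g h : ZMod N → ℂ)
    (k l : ZMod N) :
    ∑ p : ZMod N × ZMod N,
        dstft g x p * conj (dstft h y p) * zchar N (-(p.1 * k + p.2 * l)) =
      (N : ℂ) * (dstft y x (-l, k) * conj (dstft h g (-l, k))) := by
  classical
  calc
    ∑ p : ZMod N × ZMod N,
        dstft g x p * conj (dstft h y p) * zchar N (-(p.1 * k + p.2 * l))
      = ∑ p₁ : ZMod N, ∑ p₂ : ZMod N, ∑ n : ZMod N, ∑ m : ZMod N,
          (x n * conj (g (n - p₁)) * conj (y m) * h (m - p₁) * zchar N (-(p₁ * k))) *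
            zchar N ((m - n - l) * p₂) := by
        rw [Fintype.sum_prod_type]
        refine Finset.sum_congr rfl fun p₁ _ => Finset.sum_congr rfl fun p₂ _ => ?_
        rw [dstft, dstft, map_sum, Finset.sum_mul_sum, Finset.sum_mul]
        refine Finset.sum_congr rfl fun n _ => ?_
        rw [Finset.sum_mul]
        refine Finset.sum_congr rfl fun m _ => ?_
        simp only [tfshift, mshift, tshift, map_mul, zchar_conj, Complex.conj_conj]
        have e1 : zchar N (-(p₁ * k + p₂ * l)) = zchar N (-(p₁ * k)) * zchar N (-(p₂ * l)) := by
          rw [zchar_mul]; congr 1; ring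
        have e2 : zchar N ((m - n - l) * p₂) =
            zchar N (m * p₂) * (zchar N (-(n * p₂)) * zchar N (-(p₂ * l))) := by
          rw [zchar_mul, zchar_mul]; congr 1; ring
        rw [e1, e2]; ring
    _ = ∑ p₁ : ZMod N, ∑ n : ZMod N, ∑ m : ZMod N,
          (x n * conj (g (n - p₁)) * conj (y m) * h (m - p₁) * zchar N (-(p₁ * k))) *
            ∑ p₂ : ZMod N, zchar N ((m - n - l) * p₂) := by
        refine Finset.sum_congr rfl fun p₁ _ => ?_
        rw [Finset.sum_comm]
        refine Finset.sum_congr rfl fun n _ => ?_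
        rw [Finset.sum_comm]
        refine Finset.sum_congr rfl fun m _ => ?_
        rw [← Finset.mul_sum]
    _ = ∑ p₁ : ZMod N, ∑ n : ZMod N,
          (x n * conj (g (n - p₁)) * conj (y (n + l)) * h (n + l - p₁) *
            zchar N (-(p₁ * k))) * N := by
        refine Finset.sum_congr rfl fun p₁ _ => Finset.sum_congr rfl fun n _ => ?_
        simp only [zchar_sum, sub_sub, sub_eq_zero, mul_ite, mul_zero,
          Finset.sum_ite_eq', Finset.mem_univ, if_true]
    _ = (N : ℂ) * ∑ n : ZMod N, ∑ m : ZMod N,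
          x n * conj (y (n + l)) * conj (g m) * h (m + l) *
            (zchar N (m * k) * zchar N (-(n * k))) := by
        rw [Finset.sum_comm, Finset.mul_sum]
        refine Finset.sum_congr rfl fun n _ => ?_
        rw [Finset.mul_sum]
        refine (Fintype.sum_equiv (Equiv.subLeft n) _ _ fun m => ?_).symm
        simp only [Equiv.subLeft_apply]
        have e3 : zchar N (-((n - m) * k)) = zchar N (m * k) * zchar N (-(n * k)) := by
          rw [zchar_mul]; congr 1; ring
        rw [show n - (n - m) = m by ring, show n + l - (n - m) = m + l by ring, e3]
        ring
    _ = (N : ℂ) * (dstft y x (-l, k) * conj (dstft h g (-l, k))) := by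
        rw [dstft, dstft, map_sum, Finset.sum_mul_sum]
        refine congrArg _ ?_
        refine Finset.sum_congr rfl fun n _ => Finset.sum_congr rfl fun m _ => ?_
        simp only [tfshift, mshift, tshift, map_mul, zchar_conj, Complex.conj_conj,
          sub_neg_eq_add]
        ring
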